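/- arXiv:2604.15586 — 4 statements merged into one kernel-verified Lean document; each statement's English description precedes it below -/
import Mathlib

section
/- Suppose Assumption 1 holds. Then for every α ∈ ℝ^K with α_k > 0 for all k, the origin-centered matrix ellipsoid E⁰(Q(α),R(α)) contains T⁰, where Q(α) := Σ_{k=1}^K (1/α_k) F_k Q_k F_kᵀ and R(α) := Σ_{k=1}^K α_k G_kᵀ R_k G_k. -/
open Matrix

/-- The origin-centered matrix ellipsoid `E⁰(Q,R) = {X | Xᵀ Q⁻¹ X ⪯ R}` (Loewner order). -/
def matrixEllipsoid0 {q r : ℕ} (Q : Matrix (Fin q) (Fin q) ℝ)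
    (R : Matrix (Fin r) (Fin r) ℝ) : Set (Matrix (Fin q) (Fin r) ℝ) :=
  {X | (R - Xᵀ * Q⁻¹ * X).PosSemidef}

/-- The Minkowski sum `T⁰ = ⊕_{k} F_k E⁰(Q_k,R_k) G_k`. -/
def minkowskiSum {q r K : ℕ} {qd rd : Fin K → ℕ}
    (Qk : ∀ k, Matrix (Fin (qd k)) (Fin (qd k)) ℝ)
    (Rk : ∀ k, Matrix (Fin (rd k)) (Fin (rd k)) ℝ)
    (Fk : ∀ k, Matrix (Fin q) (Fin (qd k)) ℝ)
    (Gk : ∀ k, Matrix (Fin (rd k)) (Fin r) ℝ) : Set (Matrix (Fin q) (Fin r) ℝ) :=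
  {Y | ∃ X : ∀ k, Matrix (Fin (qd k)) (Fin (rd k)) ℝ,
    (∀ k, X k ∈ matrixEllipsoid0 (Qk k) (Rk k)) ∧ Y = ∑ k, Fk k * X k * Gk k}

/-- The concatenated matrix `F = [F_1 F_2 ⋯ F_K]`. -/
def concatF {q K : ℕ} {qd : Fin K → ℕ} (Fk : ∀ k, Matrix (Fin q) (Fin (qd k)) ℝ) :
    Matrix (Fin q) ((k : Fin K) × Fin (qd k)) ℝ :=
  Matrix.of fun i j => Fk j.1 i j.2

/-- The stacked matrix `G = [G_1ᵀ G_2ᵀ ⋯ G_Kᵀ]ᵀ`. -/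
def concatG {r K : ℕ} {rd : Fin K → ℕ} (Gk : ∀ k, Matrix (Fin (rd k)) (Fin r) ℝ) :
    Matrix ((k : Fin K) × Fin (rd k)) (Fin r) ℝ :=
  Matrix.of fun j i => Gk j.1 j.2 i

section Aux

variable {K : Type*}

private lemma sum_mulVec_aux {n m : Type*} [Fintype m] (s : Finset K)
    (A : K → Matrix n m ℝ) (x : m → ℝ) :
    (∑ k ∈ s, A k) *ᵥ x = ∑ k ∈ s, A k *ᵥ x := by
  induction s using Finset.cons_induction with
  | empty => simp
  | cons k s hk ih => simp [Finset.sum_cons, Matrix.add_mulVec, ih]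

private lemma dotProduct_sum_aux {n : Type*} [Fintype n] (s : Finset K)
    (x : n → ℝ) (v : K → n → ℝ) :
    x ⬝ᵥ (∑ k ∈ s, v k) = ∑ k ∈ s, x ⬝ᵥ v k := by
  induction s using Finset.cons_induction with
  | empty => simp
  | cons k s hk ih => simp [Finset.sum_cons, dotProduct_add, ih]

private lemma sum_fromBlocks_aux {n l o m : Type*} (s : Finset K)
    (A : K → Matrix n l ℝ) (B : K → Matrix n m ℝ) (C : K → Matrix o l ℝ)
    (D : K → Matrix o m ℝ) :
    ∑ k ∈ s, fromBlocks (A k) (B k) (C k) (D k)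
      = fromBlocks (∑ k ∈ s, A k) (∑ k ∈ s, B k) (∑ k ∈ s, C k) (∑ k ∈ s, D k) := by
  induction s using Finset.cons_induction with
  | empty => simp [← Matrix.fromBlocks_zero]
  | cons k s hk ih => simp [Finset.sum_cons, ih, Matrix.fromBlocks_add]

private lemma posSemidef_smul_aux {n : Type*} [Fintype n] {M : Matrix n n ℝ}
    (hM : M.PosSemidef) {c : ℝ} (hc : 0 ≤ c) : (c • M).PosSemidef := by
  refine Matrix.PosSemidef.of_dotProduct_mulVec_nonneg ?_ fun x => ?_
  · unfold Matrix.IsHermitian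
    rw [conjTranspose_smul, hM.1]; simp
  · rw [Matrix.smul_mulVec, dotProduct_smul, smul_eq_mul]
    exact mul_nonneg hc (hM.dotProduct_mulVec_nonneg x)

private lemma posDef_smul_aux {n : Type*} [Fintype n] {M : Matrix n n ℝ}
    (hM : M.PosDef) {c : ℝ} (hc : 0 < c) : (c • M).PosDef := by
  refine Matrix.PosDef.of_dotProduct_mulVec_pos ?_ fun x hx => ?_
  · unfold Matrix.IsHermitian
    rw [conjTranspose_smul, hM.1]; simp
  · rw [Matrix.smul_mulVec, dotProduct_smul, smul_eq_mul]
    exact mul_pos hc (hM.dotProduct_mulVec_pos hx)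

private lemma posSemidef_sum_aux {n : Type*} [Fintype n] (s : Finset K)
    (A : K → Matrix n n ℝ)
    (h : ∀ k ∈ s, (A k).PosSemidef) : (∑ k ∈ s, A k).PosSemidef := by
  induction s using Finset.cons_induction with
  | empty => simp [Matrix.PosSemidef.zero]
  | cons k s hk ih =>
      rw [Finset.sum_cons]
      exact (h k (Finset.mem_cons_self k s)).add (ih fun j hj => h j (Finset.mem_cons_of_mem hj))

end Aux

/-- Theorem 1, first part: under Assumption 1, for every `α > 0`,
`E⁰(Q(α),R(α)) ⊇ T⁰`, with `Q(α) = Σ_k (1/α_k) F_k Q_k F_kᵀ`,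
`R(α) = Σ_k α_k G_kᵀ R_k G_k`. -/
theorem minkowskiSum_subset_parametrized {q r K : ℕ} {qd rd : Fin K → ℕ}
    (Qk : ∀ k, Matrix (Fin (qd k)) (Fin (qd k)) ℝ)
    (Rk : ∀ k, Matrix (Fin (rd k)) (Fin (rd k)) ℝ)
    (hQk : ∀ k, (Qk k).PosDef) (hRk : ∀ k, (Rk k).PosDef)
    (Fk : ∀ k, Matrix (Fin q) (Fin (qd k)) ℝ)
    (Gk : ∀ k, Matrix (Fin (rd k)) (Fin r) ℝ)
    -- Assumption 1
    (hFk : ∀ k, Fk k ≠ 0) (hGk : ∀ k, Gk k ≠ 0)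
    (hF : (concatF Fk).rank = q) (hG : (concatG Gk).rank = r) :
    ∀ α : Fin K → ℝ, (∀ k, 0 < α k) →
      minkowskiSum Qk Rk Fk Gk ⊆
        matrixEllipsoid0 (∑ k, (α k)⁻¹ • (Fk k * Qk k * (Fk k)ᵀ))
          (∑ k, α k • ((Gk k)ᵀ * Rk k * Gk k)) := by
  intro α hα Y hY
  obtain ⟨X, hX, rfl⟩ := hY
  set Qα : Matrix (Fin q) (Fin q) ℝ := ∑ k, (α k)⁻¹ • (Fk k * Qk k * (Fk k)ᵀ) with hQαdef
  set Rα : Matrix (Fin r) (Fin r) ℝ := ∑ k, α k • ((Gk k)ᵀ * Rk k * Gk k) with hRαdef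
  set Y : Matrix (Fin q) (Fin r) ℝ := ∑ k, Fk k * X k * Gk k with hYdef
  -- injectivity of x ↦ Fᵀ x from the rank assumption
  have hinj : ∀ x : Fin q → ℝ, x ≠ 0 → ∃ k, (Fk k)ᵀ *ᵥ x ≠ 0 := by
    intro x hx
    have hrank : ((concatF Fk)ᵀ).rank = q := by rw [Matrix.rank_transpose]; exact hF
    have h2 := LinearMap.finrank_range_add_finrank_ker ((concatF Fk)ᵀ).mulVecLin
    rw [Matrix.rank] at hrank
    rw [hrank, Module.finrank_fintype_fun_eq_card, Fintype.card_fin] at h2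
    have hker : LinearMap.ker ((concatF Fk)ᵀ).mulVecLin = ⊥ :=
      Submodule.finrank_eq_zero.mp (by omega)
    by_contra h
    push_neg at h
    apply hx
    have hmem : x ∈ LinearMap.ker ((concatF Fk)ᵀ).mulVecLin := by
      rw [LinearMap.mem_ker, Matrix.mulVecLin_apply]
      funext j
      have := congrFun (h j.1) j.2
      simpa [Matrix.mulVec, dotProduct, concatF, Matrix.transpose] using this
    rwa [hker, Submodule.mem_bot] at hmem
  -- each summand of Qα is PSD
  have hpsdk : ∀ k : Fin K, ((α k)⁻¹ • (Fk k * Qk k * (Fk k)ᵀ)).PosSemidef := by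
    intro k
    have h1 : (Fk k * Qk k * (Fk k)ᵀ).PosSemidef := by
      have := (hQk k).posSemidef.mul_mul_conjTranspose_same (Fk k)
      rwa [conjTranspose_eq_transpose_of_trivial] at this
    exact posSemidef_smul_aux h1 (inv_pos.mpr (hα k)).le
  -- Qα is positive definite
  have hQαpd : Qα.PosDef := by
    refine Matrix.PosDef.of_dotProduct_mulVec_pos (posSemidef_sum_aux Finset.univ _ fun k _ => hpsdk k).1 fun x hx => ?_
    have hq : ∀ k : Fin K, star x ⬝ᵥ ((α k)⁻¹ • (Fk k * Qk k * (Fk k)ᵀ)) *ᵥ x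
        = (α k)⁻¹ * (star ((Fk k)ᵀ *ᵥ x) ⬝ᵥ (Qk k *ᵥ ((Fk k)ᵀ *ᵥ x))) := by
      intro k
      rw [Matrix.smul_mulVec, dotProduct_smul, smul_eq_mul]
      congr 1
      rw [← Matrix.mulVec_mulVec, ← Matrix.mulVec_mulVec, dotProduct_mulVec,
        ← Matrix.mulVec_transpose]
      simp [star_trivial]
    have hform : star x ⬝ᵥ Qα *ᵥ x
        = ∑ k, (α k)⁻¹ * (star ((Fk k)ᵀ *ᵥ x) ⬝ᵥ (Qk k *ᵥ ((Fk k)ᵀ *ᵥ x))) := by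
      rw [hQαdef, sum_mulVec_aux, dotProduct_sum_aux]
      exact Finset.sum_congr rfl fun k _ => hq k
    rw [hform]
    obtain ⟨k0, hk0⟩ := hinj x hx
    exact Finset.sum_pos'
      (fun k _ => mul_nonneg (inv_pos.mpr (hα k)).le ((hQk k).posSemidef.dotProduct_mulVec_nonneg _))
      ⟨k0, Finset.mem_univ _, mul_pos (inv_pos.mpr (hα k0)) ((hQk k0).dotProduct_mulVec_pos hk0)⟩
  -- the inner block matrices are PSD (Schur complement)
  have hNk : ∀ k : Fin K,
      (fromBlocks ((α k)⁻¹ • Qk k) (X k) ((X k)ᴴ) (α k • Rk k)).PosSemidef := by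
    intro k
    have hApd : ((α k)⁻¹ • Qk k).PosDef := posDef_smul_aux (hQk k) (inv_pos.mpr (hα k))
    haveI : Invertible ((α k)⁻¹ • Qk k) := hApd.isUnit.invertible
    rw [Matrix.PosDef.fromBlocks₁₁ _ _ hApd]
    have hinv : ((α k)⁻¹ • Qk k)⁻¹ = α k • (Qk k)⁻¹ := by
      haveI : Invertible ((α k)⁻¹ : ℝ) := invertibleOfNonzero (inv_pos.mpr (hα k)).ne'
      rw [Matrix.inv_smul (A := Qk k) ((α k)⁻¹)
        (isUnit_iff_ne_zero.mpr (hQk k).det_pos.ne'), invOf_eq_inv, inv_inv]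
    have heq : α k • Rk k - (X k)ᴴ * ((α k)⁻¹ • Qk k)⁻¹ * X k
        = α k • (Rk k - (X k)ᵀ * (Qk k)⁻¹ * X k) := by
      rw [hinv, conjTranspose_eq_transpose_of_trivial, Matrix.mul_smul, Matrix.smul_mul,
        smul_sub]
    rw [heq]
    exact posSemidef_smul_aux (hX k) (hα k).le
  -- the big block matrix is the sum of conjugated inner blocks
  have hterm : ∀ k : Fin K,
      (fromBlocks (Fk k) 0 0 ((Gk k)ᵀ)) *
        (fromBlocks ((α k)⁻¹ • Qk k) (X k) ((X k)ᴴ) (α k • Rk k)) *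
        (fromBlocks (Fk k) 0 0 ((Gk k)ᵀ))ᴴ
      = fromBlocks ((α k)⁻¹ • (Fk k * Qk k * (Fk k)ᵀ)) (Fk k * X k * Gk k)
          ((Fk k * X k * Gk k)ᵀ) (α k • ((Gk k)ᵀ * Rk k * Gk k)) := by
    intro k
    rw [fromBlocks_conjTranspose, fromBlocks_multiply, fromBlocks_multiply]
    simp [conjTranspose_eq_transpose_of_trivial, Matrix.mul_smul, Matrix.smul_mul,
      Matrix.mul_assoc, Matrix.transpose_mul]
  have hM : (fromBlocks Qα Y (Yᴴ) Rα).PosSemidef := by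
    have hsum : fromBlocks Qα Y (Yᴴ) Rα
        = ∑ k, (fromBlocks (Fk k) 0 0 ((Gk k)ᵀ)) *
            (fromBlocks ((α k)⁻¹ • Qk k) (X k) ((X k)ᴴ) (α k • Rk k)) *
            (fromBlocks (Fk k) 0 0 ((Gk k)ᵀ))ᴴ := by
      have hYt : Yᴴ = ∑ k, (Fk k * X k * Gk k)ᵀ := by
        rw [hYdef, conjTranspose_eq_transpose_of_trivial, Matrix.transpose_sum]
      simp_rw [hterm]
      rw [sum_fromBlocks_aux, hQαdef, hRαdef, hYdef, hYt]
    rw [hsum]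
    exact posSemidef_sum_aux Finset.univ _ fun k _ =>
      (hNk k).mul_mul_conjTranspose_same _
  haveI : Invertible Qα := hQαpd.isUnit.invertible
  have hfinal := (Matrix.PosDef.fromBlocks₁₁ Y Rα hQαpd).mp hM
  rw [conjTranspose_eq_transpose_of_trivial] at hfinal
  exact hfinal
end

section
/- Suppose Assumption 1 holds. Let Q ∈ 𝕊^q_{++} and R ∈ 𝕊^r_{++} be such that there exists α ∈ ℝ^K with α_k ≥ 0 for all k satisfying diag(α_1 Q_1⁻¹, …, α_K Q_K⁻¹) − Fᵀ Q⁻¹ F ⪰ 0 and R − Σ_{k=1}^K α_k G_kᵀ R_k G_k ⪰ 0. Then there exists β ∈ ℝ^K with β_k > 0 for all k such that E⁰(Q(β),R(β)) ⊆ E⁰(Q,R), where Q(β) := Σ_{k=1}^K (1/β_k) F_k Q_k F_kᵀ and R(β) := Σ_{k=1}^K β_k G_kᵀ R_k G_k. -/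
open Matrix

section Aux

variable {q K : ℕ} {qd : Fin K → ℕ}

/-- vector supported on block `k`. -/
def blkVec (k : Fin K) (u : Fin (qd k) → ℝ) : ((j : Fin K) × Fin (qd j)) → ℝ :=
  fun s => if h : s.1 = k then u (Fin.cast (congrArg qd h) s.2) else 0

lemma blkVec_apply_eq (k : Fin K) (u : Fin (qd k) → ℝ) (a : Fin (qd k)) :
    blkVec k u ⟨k, a⟩ = u a := by simp [blkVec]

lemma blkVec_apply_ne (k : Fin K) (u : Fin (qd k) → ℝ) {k' : Fin K} (a : Fin (qd k'))
    (h : k' ≠ k) : blkVec k u ⟨k', a⟩ = 0 := by simp [blkVec, h]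

lemma dot_sigma (x y : ((j : Fin K) × Fin (qd j)) → ℝ) :
    x ⬝ᵥ y = ∑ k, (fun a => x ⟨k, a⟩) ⬝ᵥ (fun a => y ⟨k, a⟩) := by
  rw [dotProduct, ← Finset.univ_sigma_univ, Finset.sum_sigma]
  rfl

lemma blkVec_dot (k : Fin K) (u : Fin (qd k) → ℝ) (y : ((j : Fin K) × Fin (qd j)) → ℝ) :
    blkVec k u ⬝ᵥ y = u ⬝ᵥ (fun a => y ⟨k, a⟩) := by
  rw [dot_sigma]
  rw [Fintype.sum_eq_single k]
  · simp [blkVec_apply_eq, dotProduct]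
  · intro k' hk'
    simp [dotProduct, blkVec_apply_ne _ _ _ hk']

lemma bD_mulVec (M : ∀ k, Matrix (Fin (qd k)) (Fin (qd k)) ℝ)
    (x : ((j : Fin K) × Fin (qd j)) → ℝ) (k : Fin K) (b : Fin (qd k)) :
    (blockDiagonal' M *ᵥ x) ⟨k, b⟩ = (M k *ᵥ fun a => x ⟨k, a⟩) b := by
  rw [mulVec, dotProduct, ← Finset.univ_sigma_univ, Finset.sum_sigma]
  rw [Fintype.sum_eq_single k]
  · simp [mulVec, dotProduct]
  · intro k' hk'
    apply Finset.sum_eq_zero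
    intro a _
    rw [blockDiagonal'_apply_ne _ _ _ (Ne.symm hk'), zero_mul]

lemma bD_mulVec_blkVec (M : ∀ k, Matrix (Fin (qd k)) (Fin (qd k)) ℝ)
    (k : Fin K) (u : Fin (qd k) → ℝ) :
    blockDiagonal' M *ᵥ blkVec k u = blkVec k (M k *ᵥ u) := by
  funext s
  rcases s with ⟨k', b⟩
  rcases eq_or_ne k' k with h | h
  · subst h
    rw [bD_mulVec, blkVec_apply_eq]
    congr 1
    funext a
    rw [blkVec_apply_eq]
  · rw [bD_mulVec, blkVec_apply_ne _ _ _ h]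
    have : (fun a => blkVec k u ⟨k', a⟩) = (0 : Fin (qd k') → ℝ) := by
      funext a; exact blkVec_apply_ne _ _ _ h
    rw [this, mulVec_zero]
    simp

lemma concatF_mulVec_blkVec (Fk : ∀ k, Matrix (Fin q) (Fin (qd k)) ℝ)
    (k : Fin K) (u : Fin (qd k) → ℝ) :
    concatF Fk *ᵥ blkVec k u = Fk k *ᵥ u := by
  funext i
  rw [mulVec, dotProduct, ← Finset.univ_sigma_univ, Finset.sum_sigma]
  rw [Fintype.sum_eq_single k]
  · simp [concatF, mulVec, dotProduct, blkVec_apply_eq]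
  · intro k' hk'
    apply Finset.sum_eq_zero
    intro a _
    rw [blkVec_apply_ne _ _ _ hk', mul_zero]

lemma concatF_transpose_mulVec (Fk : ∀ k, Matrix (Fin q) (Fin (qd k)) ℝ)
    (x : Fin q → ℝ) (k : Fin K) (a : Fin (qd k)) :
    ((concatF Fk)ᵀ *ᵥ x) ⟨k, a⟩ = ((Fk k)ᵀ *ᵥ x) a := rfl

lemma concatF_mul_bD (Fk : ∀ k, Matrix (Fin q) (Fin (qd k)) ℝ)
    (M : ∀ k, Matrix (Fin (qd k)) (Fin (qd k)) ℝ) :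
    concatF Fk * blockDiagonal' M = concatF (fun k => Fk k * M k) := by
  ext i s
  rcases s with ⟨k, b⟩
  rw [mul_apply, ← Finset.univ_sigma_univ, Finset.sum_sigma]
  rw [Fintype.sum_eq_single k]
  · simp [concatF, mul_apply]
  · intro k' hk'
    apply Finset.sum_eq_zero
    intro a _
    rw [blockDiagonal'_apply_ne _ _ _ hk', mul_zero]

lemma concatF_mul_concatF_transpose (A B : ∀ k, Matrix (Fin q) (Fin (qd k)) ℝ) :
    concatF A * (concatF B)ᵀ = ∑ k, A k * (B k)ᵀ := by
  ext i j
  rw [mul_apply, ← Finset.univ_sigma_univ, Finset.sum_sigma]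
  rw [Matrix.sum_apply]
  refine Finset.sum_congr rfl fun k _ => ?_
  simp [concatF, mul_apply]

end Aux

section Aux2

open Matrix

lemma real_isHermitian_of_symm {n : Type*} {A : Matrix n n ℝ} (h : Aᵀ = A) :
    A.IsHermitian := by
  rw [Matrix.IsHermitian, conjTranspose_eq_transpose_of_trivial, h]

lemma real_star_vec {n : Type*} (x : n → ℝ) : star x = x := by
  funext i; simp

lemma posSemidef_quad {n : Type*} [Fintype n] {A : Matrix n n ℝ} (hA : A.PosSemidef)
    (x : n → ℝ) : 0 ≤ x ⬝ᵥ (A *ᵥ x) := by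
  have := hA.dotProduct_mulVec_nonneg x
  rwa [real_star_vec] at this

lemma posDef_quad {n : Type*} [Fintype n] {A : Matrix n n ℝ} (hA : A.PosDef)
    {x : n → ℝ} (hx : x ≠ 0) : 0 < x ⬝ᵥ (A *ᵥ x) := by
  have := hA.dotProduct_mulVec_pos hx
  rwa [real_star_vec] at this

variable {q K : ℕ} {qd : Fin K → ℕ}

lemma bD_posDef {M : ∀ k, Matrix (Fin (qd k)) (Fin (qd k)) ℝ}
    (hM : ∀ k, (M k).PosDef) : (blockDiagonal' M).PosDef := by
  rw [posDef_iff_dotProduct_mulVec]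
  constructor
  · apply real_isHermitian_of_symm
    ext s t
    rcases s with ⟨k, i⟩; rcases t with ⟨k', j⟩
    rcases eq_or_ne k k' with h | h
    · subst h
      rw [transpose_apply, blockDiagonal'_apply_eq, blockDiagonal'_apply_eq]
      have := (hM k).1
      rw [Matrix.IsHermitian, conjTranspose_eq_transpose_of_trivial] at this
      exact congrFun (congrFun this i) j
    · rw [transpose_apply, blockDiagonal'_apply_ne _ _ _ (Ne.symm h),
        blockDiagonal'_apply_ne _ _ _ h]
  · intro x hx
    rw [real_star_vec]
    have hform : x ⬝ᵥ (blockDiagonal' M *ᵥ x) =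
        ∑ k, (fun a => x ⟨k, a⟩) ⬝ᵥ (M k *ᵥ fun a => x ⟨k, a⟩) := by
      rw [dot_sigma]
      refine Finset.sum_congr rfl fun k _ => ?_
      congr 1
      funext a
      exact bD_mulVec M x k a
    rw [hform]
    obtain ⟨s, hs⟩ := Function.ne_iff.mp hx
    refine Finset.sum_pos' (fun k _ => posSemidef_quad (hM k).posSemidef _) ⟨s.1, Finset.mem_univ _, ?_⟩
    refine posDef_quad (hM s.1) ?_
    intro h0
    exact hs (congrFun h0 s.2)

lemma bD_inv_eq {α : Fin K → ℝ} (hα : ∀ k, 0 < α k)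
    {Qk : ∀ k, Matrix (Fin (qd k)) (Fin (qd k)) ℝ} (hQk : ∀ k, (Qk k).PosDef) :
    (blockDiagonal' (fun k => α k • (Qk k)⁻¹))⁻¹ =
      blockDiagonal' (fun k => (α k)⁻¹ • Qk k) := by
  apply inv_eq_right_inv
  rw [← blockDiagonal'_mul]
  have : (fun k => (α k • (Qk k)⁻¹) * ((α k)⁻¹ • Qk k)) = fun k =>
      (1 : Matrix (Fin (qd k)) (Fin (qd k)) ℝ) := by
    funext k
    rw [Matrix.smul_mul, Matrix.mul_smul, Matrix.nonsing_inv_mul _ (isUnit_iff_ne_zero.mpr (hQk k).det_pos.ne'),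
      smul_smul]
    rw [mul_inv_cancel₀ (hα k).ne', one_smul]
  rw [this]; exact blockDiagonal'_one

/-- Loewner anti-monotonicity of the inverse, via Schur complements. -/
lemma inv_sub_inv_posSemidef {n : Type*} [Fintype n] [DecidableEq n]
    {A B : Matrix n n ℝ} (hA : A.PosDef) (hB : B.PosDef)
    (hAB : (B - A).PosSemidef) : (A⁻¹ - B⁻¹).PosSemidef := by
  haveI : Invertible B := hB.isUnit.invertible
  haveI : Invertible A⁻¹ := hA.inv.isUnit.invertible
  have key : (fromBlocks B (1 : Matrix n n ℝ) (1 : Matrix n n ℝ)ᴴ A⁻¹).PosSemidef := by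
    rw [PosDef.fromBlocks₂₂ _ _ hA.inv]
    have h2 : B - 1 * (A⁻¹)⁻¹ * (1 : Matrix n n ℝ)ᴴ = B - A := by
      rw [Matrix.nonsing_inv_nonsing_inv _ (isUnit_iff_ne_zero.mpr hA.det_pos.ne'), conjTranspose_one,
        Matrix.one_mul, Matrix.mul_one]
    rw [h2]
    exact hAB
  have := (PosDef.fromBlocks₁₁ (1 : Matrix n n ℝ) A⁻¹ hB).mp key
  rwa [conjTranspose_one, Matrix.one_mul, Matrix.mul_one] at this

lemma rank_eq_surjective {m : ℕ} {n : Type*} [Fintype n]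
    {A : Matrix (Fin m) n ℝ} (hA : A.rank = m) :
    Function.Surjective A.mulVec := by
  have hr : LinearMap.range A.mulVecLin = ⊤ := by
    apply Submodule.eq_top_of_finrank_eq
    rw [← Matrix.rank, hA]
    simp [Module.finrank_pi]
  intro y
  obtain ⟨x, hx⟩ := LinearMap.range_eq_top.mp hr y
  exact ⟨x, hx⟩

end Aux2

section Aux3

open Matrix

lemma real_symm_of_isHermitian {n : Type*} {A : Matrix n n ℝ} (h : A.IsHermitian) :
    Aᵀ = A := by
  rw [← conjTranspose_eq_transpose_of_trivial, h]

lemma posDef_smul {n : Type*} [Fintype n] {A : Matrix n n ℝ} (hA : A.PosDef)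
    {c : ℝ} (hc : 0 < c) : (c • A).PosDef := by
  rw [posDef_iff_dotProduct_mulVec]
  constructor
  · apply real_isHermitian_of_symm
    rw [Matrix.transpose_smul, real_symm_of_isHermitian hA.1]
  · intro x hx
    rw [real_star_vec, smul_mulVec, dotProduct_smul, smul_eq_mul]
    exact mul_pos hc (posDef_quad hA hx)

lemma sum_mulVec' {n m ι : Type*} [Fintype n] [Fintype ι]
    (A : ι → Matrix m n ℝ) (x : n → ℝ) : (∑ i, A i) *ᵥ x = ∑ i, A i *ᵥ x := by
  funext j
  simp only [mulVec, dotProduct, Finset.sum_apply, Matrix.sum_apply, Finset.sum_mul]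
  rw [Finset.sum_comm]

lemma dotProduct_sum' {n ι : Type*} [Fintype n] [Fintype ι]
    (x : n → ℝ) (v : ι → n → ℝ) : x ⬝ᵥ (∑ i, v i) = ∑ i, x ⬝ᵥ v i := by
  simp only [dotProduct, Finset.sum_apply, Finset.mul_sum]
  rw [Finset.sum_comm]

end Aux3

/-- Theorem 1, second part -/
theorem exists_parametrized_subset {q r K : ℕ} {qd rd : Fin K → ℕ}
    (Qk : ∀ k, Matrix (Fin (qd k)) (Fin (qd k)) ℝ)
    (Rk : ∀ k, Matrix (Fin (rd k)) (Fin (rd k)) ℝ)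
    (hQk : ∀ k, (Qk k).PosDef) (hRk : ∀ k, (Rk k).PosDef)
    (Fk : ∀ k, Matrix (Fin q) (Fin (qd k)) ℝ)
    (Gk : ∀ k, Matrix (Fin (rd k)) (Fin r) ℝ)
    -- Assumption 1
    (hFk : ∀ k, Fk k ≠ 0) (hGk : ∀ k, Gk k ≠ 0)
    (hF : (concatF Fk).rank = q) (hG : (concatG Gk).rank = r)
    (Q : Matrix (Fin q) (Fin q) ℝ) (R : Matrix (Fin r) (Fin r) ℝ)
    (hQ : Q.PosDef) (hR : R.PosDef)
    (α : Fin K → ℝ) (hα : ∀ k, 0 ≤ α k)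
    (h1 : (Matrix.blockDiagonal' (fun k => α k • (Qk k)⁻¹) -
      (concatF Fk)ᵀ * Q⁻¹ * concatF Fk).PosSemidef)
    (h2 : (R - ∑ k, α k • ((Gk k)ᵀ * Rk k * Gk k)).PosSemidef) :
    ∃ β : Fin K → ℝ, (∀ k, 0 < β k) ∧
      matrixEllipsoid0 (∑ k, (β k)⁻¹ • (Fk k * Qk k * (Fk k)ᵀ))
          (∑ k, β k • ((Gk k)ᵀ * Rk k * Gk k)) ⊆
        matrixEllipsoid0 Q R := by
  classical
  -- Step 1: every α k is strictly positive
  have hαpos : ∀ k, 0 < α k := by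
    intro k
    rcases (hα k).lt_or_eq with h | h
    · exact h
    exfalso
    apply hFk k
    have hFku : ∀ u : Fin (qd k) → ℝ, Fk k *ᵥ u = 0 := by
      intro u
      by_contra hne
      have hq := posSemidef_quad h1 (blkVec k u)
      rw [Matrix.sub_mulVec, dotProduct_sub] at hq
      have e1 : blkVec k u ⬝ᵥ
          ((Matrix.blockDiagonal' fun k => α k • (Qk k)⁻¹) *ᵥ blkVec k u) = 0 := by
        rw [bD_mulVec_blkVec, blkVec_dot]
        simp only [blkVec_apply_eq]
        rw [← h, zero_smul, Matrix.zero_mulVec, dotProduct_zero]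
      have e2 : blkVec k u ⬝ᵥ (((concatF Fk)ᵀ * Q⁻¹ * concatF Fk) *ᵥ blkVec k u) =
          (Fk k *ᵥ u) ⬝ᵥ (Q⁻¹ *ᵥ (Fk k *ᵥ u)) := by
        rw [← Matrix.mulVec_mulVec, ← Matrix.mulVec_mulVec, concatF_mulVec_blkVec,
          dotProduct_mulVec, vecMul_transpose, concatF_mulVec_blkVec]
      rw [e1, e2] at hq
      have hpos := posDef_quad hQ.inv hne
      linarith
    ext i a
    have h0 := congrFun (hFku (Pi.single a 1)) i
    simpa [mulVec_single] using h0
  -- notation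
  set Fc := concatF Fk with hFc
  set D := Matrix.blockDiagonal' (fun k => α k • (Qk k)⁻¹) with hD
  set Qα := ∑ k, (α k)⁻¹ • (Fk k * Qk k * (Fk k)ᵀ) with hQα
  have hDpd : D.PosDef := bD_posDef (fun k => posDef_smul (hQk k).inv (hαpos k))
  haveI : Invertible Q := Q.invertibleOfIsUnitDet (isUnit_iff_ne_zero.mpr hQ.det_pos.ne')
  haveI : Invertible D := D.invertibleOfIsUnitDet (isUnit_iff_ne_zero.mpr hDpd.det_pos.ne')
  -- Step 2: Schur complement argument:  Q - Qα ⪰ 0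
  have hb1 : (fromBlocks Q Fc Fcᴴ D).PosSemidef := by
    rw [PosDef.fromBlocks₁₁ _ _ hQ, conjTranspose_eq_transpose_of_trivial]
    exact h1
  have hb2 := (PosDef.fromBlocks₂₂ _ _ hDpd).mp hb1
  have hinv : D⁻¹ = Matrix.blockDiagonal' (fun k => (α k)⁻¹ • Qk k) :=
    bD_inv_eq hαpos hQk
  have hcalc : Fc * D⁻¹ * Fcᴴ = Qα := by
    rw [conjTranspose_eq_transpose_of_trivial, hinv, hFc, concatF_mul_bD,
      concatF_mul_concatF_transpose, hQα]
    refine Finset.sum_congr rfl fun k _ => ?_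
    rw [Matrix.mul_smul, Matrix.smul_mul]
  rw [hcalc] at hb2
  -- Step 3: Qα is positive definite
  have hQαpd : Qα.PosDef := by
    rw [posDef_iff_dotProduct_mulVec]
    constructor
    · apply real_isHermitian_of_symm
      rw [hQα, Matrix.transpose_sum]
      refine Finset.sum_congr rfl fun k _ => ?_
      rw [Matrix.transpose_smul, Matrix.transpose_mul, Matrix.transpose_mul,
        Matrix.transpose_transpose, real_symm_of_isHermitian (hQk k).1, Matrix.mul_assoc]
    · intro x hx
      rw [real_star_vec, hQα, sum_mulVec', dotProduct_sum']
      have hterm : ∀ k, x ⬝ᵥ (((α k)⁻¹ • (Fk k * Qk k * (Fk k)ᵀ)) *ᵥ x) =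
          (α k)⁻¹ * (((Fk k)ᵀ *ᵥ x) ⬝ᵥ (Qk k *ᵥ ((Fk k)ᵀ *ᵥ x))) := by
        intro k
        rw [smul_mulVec, dotProduct_smul, smul_eq_mul]
        congr 1
        rw [← Matrix.mulVec_mulVec, ← Matrix.mulVec_mulVec, dotProduct_mulVec,
          ← Matrix.mulVec_transpose]
      have hy : ∃ k, (Fk k)ᵀ *ᵥ x ≠ 0 := by
        by_contra hcon
        push_neg at hcon
        have hFt : Fcᵀ *ᵥ x = 0 := by
          funext s
          rcases s with ⟨k, a⟩
          rw [hFc, concatF_transpose_mulVec, hcon k]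
          rfl
        have hsurj := rank_eq_surjective hF
        have hdot : x ⬝ᵥ x = 0 := by
          obtain ⟨y, hy⟩ := hsurj x
          calc x ⬝ᵥ x = x ⬝ᵥ (Fc *ᵥ y) := by rw [hy]
            _ = (Fcᵀ *ᵥ x) ⬝ᵥ y := by rw [dotProduct_mulVec, ← Matrix.mulVec_transpose]
            _ = 0 := by rw [hFt, zero_dotProduct]
        exact hx (dotProduct_self_eq_zero.mp hdot)
      obtain ⟨k0, hk0⟩ := hy
      refine Finset.sum_pos' (fun k _ => ?_) ⟨k0, Finset.mem_univ _, ?_⟩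
      · rw [hterm k]
        exact mul_nonneg (inv_nonneg.mpr (hα k)) (posSemidef_quad (hQk k).posSemidef _)
      · rw [hterm k0]
        exact mul_pos (inv_pos.mpr (hαpos k0)) (posDef_quad (hQk k0) hk0)
  -- Step 4: inverse monotonicity
  have hmono : (Qα⁻¹ - Q⁻¹).PosSemidef := inv_sub_inv_posSemidef hQαpd hQ hb2
  -- Step 5: conclude with β = α
  refine ⟨α, hαpos, ?_⟩
  intro X hX
  have hXm : ((∑ k, α k • ((Gk k)ᵀ * Rk k * Gk k)) - Xᵀ * Qα⁻¹ * X).PosSemidef := hX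
  have t3 : (Xᵀ * (Qα⁻¹ - Q⁻¹) * X).PosSemidef := by
    have := hmono.conjTranspose_mul_mul_same X
    rwa [conjTranspose_eq_transpose_of_trivial] at this
  show (R - Xᵀ * Q⁻¹ * X).PosSemidef
  have key : R - Xᵀ * Q⁻¹ * X =
      (R - ∑ k, α k • ((Gk k)ᵀ * Rk k * Gk k)) +
        (((∑ k, α k • ((Gk k)ᵀ * Rk k * Gk k)) - Xᵀ * Qα⁻¹ * X) +
          (Xᵀ * (Qα⁻¹ - Q⁻¹) * X)) := by
    rw [Matrix.mul_sub, Matrix.sub_mul]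
    abel
  rw [key]
  exact h2.add (hXm.add t3)
end

section
/- Suppose Assumption 1 holds. Fix α⁽ᵗ⁾ ∈ ℝ^K with α⁽ᵗ⁾_k > 0 for all k, and define the surrogate g(α | α⁽ᵗ⁾) := Σ_{k=1}^K (A_k α_k + B_k/α_k) + C with A_k := q·tr(R(α⁽ᵗ⁾)⁻¹ G_kᵀ R_k G_k), B_k := r·tr(Q(α⁽ᵗ⁾)⁻¹ F_k Q_k F_kᵀ), C := f(α⁽ᵗ⁾) − 2qr. Then g(α | α⁽ᵗ⁾) ≥ f(α) for every α ∈ ℝ^K with all α_k > 0, and g(α⁽ᵗ⁾ | α⁽ᵗ⁾) = f(α⁽ᵗ⁾). -/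
open Matrix
open scoped Kronecker

/-- `Q(α) = Σ_k (1/α_k) F_k Q_k F_kᵀ`. -/
noncomputable def Qmat {q K : ℕ} {qd : Fin K → ℕ}
    (Qk : ∀ k, Matrix (Fin (qd k)) (Fin (qd k)) ℝ)
    (Fk : ∀ k, Matrix (Fin q) (Fin (qd k)) ℝ) (α : Fin K → ℝ) :
    Matrix (Fin q) (Fin q) ℝ :=
  ∑ k, (α k)⁻¹ • (Fk k * Qk k * (Fk k)ᵀ)

/-- `R(α) = Σ_k α_k G_kᵀ R_k G_k`. -/
def Rmat {r K : ℕ} {rd : Fin K → ℕ} (Rk : ∀ k, Matrix (Fin (rd k)) (Fin (rd k)) ℝ)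
    (Gk : ∀ k, Matrix (Fin (rd k)) (Fin r) ℝ) (α : Fin K → ℝ) :
    Matrix (Fin r) (Fin r) ℝ :=
  ∑ k, α k • ((Gk k)ᵀ * Rk k * Gk k)

/-- The objective `f(α) = log det (R(α) ⊗ Q(α))`. -/
noncomputable def fobj {q r K : ℕ} {qd rd : Fin K → ℕ}
    (Qk : ∀ k, Matrix (Fin (qd k)) (Fin (qd k)) ℝ)
    (Rk : ∀ k, Matrix (Fin (rd k)) (Fin (rd k)) ℝ)
    (Fk : ∀ k, Matrix (Fin q) (Fin (qd k)) ℝ)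
    (Gk : ∀ k, Matrix (Fin (rd k)) (Fin r) ℝ) (α : Fin K → ℝ) : ℝ :=
  Real.log (Rmat Rk Gk α ⊗ₖ Qmat Qk Fk α).det

/-- The feasible set `S = {α > 0 : tr(R(α)) = r}`. -/
def feasibleS {r K : ℕ} {rd : Fin K → ℕ} (Rk : ∀ k, Matrix (Fin (rd k)) (Fin (rd k)) ℝ)
    (Gk : ∀ k, Matrix (Fin (rd k)) (Fin r) ℝ) : Set (Fin K → ℝ) :=
  {α | (∀ k, 0 < α k) ∧ (Rmat Rk Gk α).trace = (r : ℝ)}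

lemma my_trace_eq_sum_eigenvalues {n : Type*} [Fintype n] [DecidableEq n]
    {A : Matrix n n ℝ} (hA : A.IsHermitian) : A.trace = ∑ i, hA.eigenvalues i := by
  conv_lhs => rw [hA.spectral_theorem]
  rw [Unitary.conjStarAlgAut_apply, Matrix.trace_mul_cycle,
    (Matrix.mem_unitaryGroup_iff').mp (Matrix.IsHermitian.eigenvectorUnitary hA).2, one_mul]
  simp [Matrix.trace_diagonal]

lemma my_log_det_le {n : Type*} [Fintype n] [DecidableEq n]
    {C : Matrix n n ℝ} (hC : C.PosDef) :
    Real.log C.det ≤ C.trace - Fintype.card n := by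
  rw [hC.isHermitian.det_eq_prod_eigenvalues]
  simp only [RCLike.ofReal_real_eq_id, id_eq]
  rw [my_trace_eq_sum_eigenvalues hC.isHermitian]
  rw [Real.log_prod (fun i _ => (hC.eigenvalues_pos i).ne')]
  calc ∑ i, Real.log (hC.isHermitian.eigenvalues i)
      ≤ ∑ i, (hC.isHermitian.eigenvalues i - 1) :=
        Finset.sum_le_sum fun i _ => Real.log_le_sub_one_of_pos (hC.eigenvalues_pos i)
    _ = (∑ i, hC.isHermitian.eigenvalues i) - Fintype.card n := by
        rw [Finset.sum_sub_distrib]; simp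

lemma my_posDef_of_det {n : Type*} [Fintype n] [DecidableEq n]
    {C : Matrix n n ℝ} (hC : C.PosSemidef) (hd : C.det ≠ 0) : C.PosDef := by
  refine Matrix.PosDef.of_dotProduct_mulVec_pos hC.isHermitian fun x hx => ?_
  rcases lt_or_eq_of_le (hC.dotProduct_mulVec_nonneg x) with h | h
  · exact h
  · exfalso
    have h0 : C *ᵥ x = 0 := (hC.dotProduct_mulVec_zero_iff x).mp h.symm
    have : x = 0 := by
      have hinj : Function.Injective C.mulVec :=
        Matrix.mulVec_injective_iff_isUnit.mpr ((Matrix.isUnit_iff_isUnit_det C).mpr hd.isUnit)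
      have := hinj (h0.trans (Matrix.mulVec_zero C).symm)
      exact this
    exact hx this

open scoped MatrixOrder in
lemma my_logdet_bound {n : Type*} [Fintype n] [DecidableEq n]
    {A B : Matrix n n ℝ} (hA : A.PosDef) (hB : B.PosDef) :
    Real.log B.det ≤ Real.log A.det + (A⁻¹ * B).trace - Fintype.card n := by
  have hAi : (A⁻¹).PosDef := hA.inv
  set S := CFC.sqrt (A⁻¹) with hSdef
  have hSpsd : S.PosSemidef := (CFC.sqrt_nonneg (A⁻¹)).posSemidef
  have hSS : S * S = A⁻¹ := CFC.sqrt_mul_sqrt_self (A⁻¹) hAi.posSemidef.nonneg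
  have hSh : Sᴴ = S := hSpsd.isHermitian
  have hCpsd : (S * B * S).PosSemidef := by
    have := hB.posSemidef.mul_mul_conjTranspose_same S
    rwa [hSh] at this
  have hdetA : (0:ℝ) < A.det := hA.det_pos
  have hdetB : (0:ℝ) < B.det := hB.det_pos
  have hdetC : (S * B * S).det = A.det⁻¹ * B.det := by
    rw [Matrix.det_mul, Matrix.det_mul, mul_comm S.det B.det, mul_assoc, ← Matrix.det_mul, hSS,
      Matrix.det_nonsing_inv, Ring.inverse_eq_inv, mul_comm]
  have hCpd : (S * B * S).PosDef := my_posDef_of_det hCpsd (by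
    rw [hdetC]; positivity)
  have htr : (S * B * S).trace = (A⁻¹ * B).trace := by
    rw [Matrix.trace_mul_cycle, hSS]
  have := my_log_det_le hCpd
  rw [hdetC, htr, Real.log_mul (by positivity) hdetB.ne', Real.log_inv] at this
  linarith

lemma my_sum_mulVec {ι n m : Type*} [Fintype ι] [Fintype n]
    (T : ι → Matrix m n ℝ) (x : n → ℝ) :
    (∑ i, T i) *ᵥ x = ∑ i, T i *ᵥ x := by
  ext j
  simp [Matrix.mulVec, dotProduct, Matrix.sum_apply, Finset.sum_mul]
  rw [Finset.sum_comm]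

lemma my_dotProduct_sum {ι n : Type*} [Fintype ι] [Fintype n]
    (x : n → ℝ) (v : ι → n → ℝ) :
    x ⬝ᵥ (∑ i, v i) = ∑ i, x ⬝ᵥ v i := by
  simp [dotProduct, Finset.sum_apply, Finset.mul_sum]
  rw [Finset.sum_comm]

lemma my_psd_smul {n : Type*} [Fintype n] {A : Matrix n n ℝ} (hA : A.PosSemidef)
    {c : ℝ} (hc : 0 ≤ c) : (c • A).PosSemidef := by
  refine Matrix.PosSemidef.of_dotProduct_mulVec_nonneg ?_ fun x => ?_
  · unfold Matrix.IsHermitian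
    rw [Matrix.conjTranspose_smul, star_trivial, hA.isHermitian.eq]
  · rw [Matrix.smul_mulVec, dotProduct_smul, smul_eq_mul]
    exact mul_nonneg hc (hA.dotProduct_mulVec_nonneg x)

lemma my_herm_sum {ι n : Type*} [Fintype ι] [Fintype n]
    {T : ι → Matrix n n ℝ} (h : ∀ i, (T i).IsHermitian) :
    (∑ i, T i).IsHermitian := by
  unfold Matrix.IsHermitian
  rw [Matrix.conjTranspose_sum]
  exact Finset.sum_congr rfl fun i _ => (h i).eq

lemma Qmat_posDef {q K : ℕ} {qd : Fin K → ℕ}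
    (Qk : ∀ k, Matrix (Fin (qd k)) (Fin (qd k)) ℝ)
    (Fk : ∀ k, Matrix (Fin q) (Fin (qd k)) ℝ)
    (hQk : ∀ k, (Qk k).PosDef)
    (hF : (Matrix.of fun i (j : (k : Fin K) × Fin (qd k)) => Fk j.1 i j.2 :
      Matrix (Fin q) ((k : Fin K) × Fin (qd k)) ℝ).rank = q)
    (α : Fin K → ℝ) (hα : ∀ k, 0 < α k) : (Qmat Qk Fk α).PosDef := by
  set M : Matrix (Fin q) ((k : Fin K) × Fin (qd k)) ℝ :=
    Matrix.of fun i (j : (k : Fin K) × Fin (qd k)) => Fk j.1 i j.2 with hM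
  have hpsd : ∀ k, ((α k)⁻¹ • (Fk k * Qk k * (Fk k)ᵀ)).PosSemidef := by
    intro k
    have h1 : (Fk k * Qk k * (Fk k)ᵀ).PosSemidef := by
      have := (hQk k).posSemidef.mul_mul_conjTranspose_same (Fk k)
      simpa using this
    exact my_psd_smul h1 (inv_nonneg.mpr (hα k).le)
  refine Matrix.PosDef.of_dotProduct_mulVec_pos ?_ ?_
  · exact my_herm_sum fun k => (hpsd k).isHermitian
  · intro x hx
    have hrank : (Mᵀ).rank = q := by rw [Matrix.rank_transpose]; exact hF
    have hker : ∀ y : Fin q → ℝ, Mᵀ *ᵥ y = 0 → y = 0 := by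
      intro y hy
      have hfin := LinearMap.finrank_range_add_finrank_ker (Mᵀ).mulVecLin
      rw [show Module.finrank ℝ (LinearMap.range (Mᵀ).mulVecLin) = q from hrank,
        Module.finrank_fin_fun] at hfin
      have hker0 : Module.finrank ℝ (LinearMap.ker (Mᵀ).mulVecLin) = 0 := by omega
      have hbot := Submodule.finrank_eq_zero.mp hker0
      have hy' : y ∈ LinearMap.ker (Mᵀ).mulVecLin := by
        rw [LinearMap.mem_ker, Matrix.mulVecLin_apply]; exact hy
      rw [hbot] at hy'
      simpa using hy'
    have hexists : ∃ k, (Fk k)ᵀ *ᵥ x ≠ 0 := by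
      by_contra h
      push_neg at h
      apply hx
      apply hker
      ext j
      have := congrFun (h j.1) j.2
      simpa [Matrix.mulVec, dotProduct, hM] using this
    obtain ⟨k₀, hk₀⟩ := hexists
    have hterm : ∀ k, star x ⬝ᵥ (((α k)⁻¹ • (Fk k * Qk k * (Fk k)ᵀ)) *ᵥ x)
        = (α k)⁻¹ * (((Fk k)ᵀ *ᵥ x) ⬝ᵥ (Qk k *ᵥ ((Fk k)ᵀ *ᵥ x))) := by
      intro k
      rw [Matrix.smul_mulVec, dotProduct_smul, smul_eq_mul]
      congr 1
      rw [star_trivial, ← Matrix.mulVec_mulVec, ← Matrix.mulVec_mulVec,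
        Matrix.dotProduct_mulVec, Matrix.mulVec_transpose]
    have hQ : Qmat Qk Fk α *ᵥ x = ∑ k, ((α k)⁻¹ • (Fk k * Qk k * (Fk k)ᵀ)) *ᵥ x := by
      rw [Qmat]; exact my_sum_mulVec _ _
    rw [show star x ⬝ᵥ (Qmat Qk Fk α *ᵥ x)
        = ∑ k, star x ⬝ᵥ (((α k)⁻¹ • (Fk k * Qk k * (Fk k)ᵀ)) *ᵥ x) by
      rw [hQ, star_trivial, my_dotProduct_sum]]
    apply Finset.sum_pos'
    · intro k _
      exact (hpsd k).dotProduct_mulVec_nonneg x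
    · refine ⟨k₀, Finset.mem_univ _, ?_⟩
      rw [hterm k₀]
      have hpos := (hQk k₀).dotProduct_mulVec_pos hk₀
      rw [star_trivial] at hpos
      exact mul_pos (inv_pos.mpr (hα k₀)) hpos

lemma Rmat_posDef {r K : ℕ} {rd : Fin K → ℕ}
    (Rk : ∀ k, Matrix (Fin (rd k)) (Fin (rd k)) ℝ)
    (Gk : ∀ k, Matrix (Fin (rd k)) (Fin r) ℝ)
    (hRk : ∀ k, (Rk k).PosDef)
    (hG : (Matrix.of fun (j : (k : Fin K) × Fin (rd k)) i => Gk j.1 j.2 i :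
      Matrix ((k : Fin K) × Fin (rd k)) (Fin r) ℝ).rank = r)
    (α : Fin K → ℝ) (hα : ∀ k, 0 < α k) : (Rmat Rk Gk α).PosDef := by
  set M : Matrix ((k : Fin K) × Fin (rd k)) (Fin r) ℝ :=
    Matrix.of fun (j : (k : Fin K) × Fin (rd k)) i => Gk j.1 j.2 i with hM
  have hpsd : ∀ k, (α k • ((Gk k)ᵀ * Rk k * Gk k)).PosSemidef := by
    intro k
    have h1 : ((Gk k)ᵀ * Rk k * Gk k).PosSemidef := by
      have := (hRk k).posSemidef.conjTranspose_mul_mul_same (Gk k)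
      simpa using this
    exact my_psd_smul h1 (hα k).le
  refine Matrix.PosDef.of_dotProduct_mulVec_pos ?_ ?_
  · exact my_herm_sum fun k => (hpsd k).isHermitian
  · intro x hx
    have hker : ∀ y : Fin r → ℝ, M *ᵥ y = 0 → y = 0 := by
      intro y hy
      have hfin := LinearMap.finrank_range_add_finrank_ker M.mulVecLin
      rw [show Module.finrank ℝ (LinearMap.range M.mulVecLin) = r from hG,
        Module.finrank_fin_fun] at hfin
      have hker0 : Module.finrank ℝ (LinearMap.ker M.mulVecLin) = 0 := by omega
      have hbot := Submodule.finrank_eq_zero.mp hker0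
      have hy' : y ∈ LinearMap.ker M.mulVecLin := by
        rw [LinearMap.mem_ker, Matrix.mulVecLin_apply]; exact hy
      rw [hbot] at hy'
      simpa using hy'
    have hexists : ∃ k, Gk k *ᵥ x ≠ 0 := by
      by_contra h
      push_neg at h
      apply hx
      apply hker
      ext j
      have := congrFun (h j.1) j.2
      simpa [Matrix.mulVec, dotProduct, hM] using this
    obtain ⟨k₀, hk₀⟩ := hexists
    have hterm : ∀ k, star x ⬝ᵥ ((α k • ((Gk k)ᵀ * Rk k * Gk k)) *ᵥ x)
        = α k * ((Gk k *ᵥ x) ⬝ᵥ (Rk k *ᵥ (Gk k *ᵥ x))) := by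
      intro k
      rw [Matrix.smul_mulVec, dotProduct_smul, smul_eq_mul]
      congr 1
      rw [star_trivial, ← Matrix.mulVec_mulVec, ← Matrix.mulVec_mulVec,
        Matrix.dotProduct_mulVec, Matrix.vecMul_transpose]
    have hR : Rmat Rk Gk α *ᵥ x = ∑ k, (α k • ((Gk k)ᵀ * Rk k * Gk k)) *ᵥ x := by
      rw [Rmat]; exact my_sum_mulVec _ _
    rw [show star x ⬝ᵥ (Rmat Rk Gk α *ᵥ x)
        = ∑ k, star x ⬝ᵥ ((α k • ((Gk k)ᵀ * Rk k * Gk k)) *ᵥ x) by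
      rw [hR, star_trivial, my_dotProduct_sum]]
    apply Finset.sum_pos'
    · intro k _
      exact (hpsd k).dotProduct_mulVec_nonneg x
    · refine ⟨k₀, Finset.mem_univ _, ?_⟩
      rw [hterm k₀]
      have hpos := (hRk k₀).dotProduct_mulVec_pos hk₀
      rw [star_trivial] at hpos
      exact mul_pos (hα k₀) hpos

lemma my_trace_mul_sum {n : Type*} [Fintype n] {K : ℕ}
    (X : Matrix n n ℝ) (c : Fin K → ℝ) (T : Fin K → Matrix n n ℝ) :
    (X * ∑ k, c k • T k).trace = ∑ k, c k * (X * T k).trace := by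
  rw [Finset.mul_sum, Matrix.trace_sum]
  exact Finset.sum_congr rfl fun k _ => by
    rw [Matrix.mul_smul, Matrix.trace_smul, smul_eq_mul]

/-- Proposition 6: the surrogate function `g(· | α⁽ᵗ⁾)` upper-bounds `f`
on the positive orthant, with equality at `α⁽ᵗ⁾`. -/
theorem surrogate_upper_bound {q r K : ℕ} {qd rd : Fin K → ℕ}
    (Qk : ∀ k, Matrix (Fin (qd k)) (Fin (qd k)) ℝ)
    (Rk : ∀ k, Matrix (Fin (rd k)) (Fin (rd k)) ℝ)
    (hQk : ∀ k, (Qk k).PosDef) (hRk : ∀ k, (Rk k).PosDef)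
    (Fk : ∀ k, Matrix (Fin q) (Fin (qd k)) ℝ)
    (Gk : ∀ k, Matrix (Fin (rd k)) (Fin r) ℝ)
    -- Assumption 1
    (hFk : ∀ k, Fk k ≠ 0) (hGk : ∀ k, Gk k ≠ 0)
    (hF : (Matrix.of fun i (j : (k : Fin K) × Fin (qd k)) => Fk j.1 i j.2 :
      Matrix (Fin q) ((k : Fin K) × Fin (qd k)) ℝ).rank = q)
    (hG : (Matrix.of fun (j : (k : Fin K) × Fin (rd k)) i => Gk j.1 j.2 i :
      Matrix ((k : Fin K) × Fin (rd k)) (Fin r) ℝ).rank = r)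
    (αt : Fin K → ℝ) (hαt : ∀ k, 0 < αt k)
    (A B : Fin K → ℝ) (CC : ℝ) (g : (Fin K → ℝ) → ℝ)
    (hA : A = fun k => (q : ℝ) * ((Rmat Rk Gk αt)⁻¹ * ((Gk k)ᵀ * Rk k * Gk k)).trace)
    (hB : B = fun k => (r : ℝ) * ((Qmat Qk Fk αt)⁻¹ * (Fk k * Qk k * (Fk k)ᵀ)).trace)
    (hC : CC = fobj Qk Rk Fk Gk αt - 2 * (q : ℝ) * (r : ℝ))
    (hg : g = fun α => (∑ k, (A k * α k + B k / α k)) + CC) :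
    (∀ α : Fin K → ℝ, (∀ k, 0 < α k) → fobj Qk Rk Fk Gk α ≤ g α) ∧
      g αt = fobj Qk Rk Fk Gk αt := by
  subst hg hC hA hB
  have QDt : (Qmat Qk Fk αt).PosDef := Qmat_posDef Qk Fk hQk hF αt hαt
  have RDt : (Rmat Rk Gk αt).PosDef := Rmat_posDef Rk Gk hRk hG αt hαt
  have fobj_eq : ∀ α : Fin K → ℝ, (∀ k, 0 < α k) →
      fobj Qk Rk Fk Gk α
        = (q : ℝ) * Real.log (Rmat Rk Gk α).det
          + (r : ℝ) * Real.log (Qmat Qk Fk α).det := by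
    intro α hα
    have hQD := Qmat_posDef Qk Fk hQk hF α hα
    have hRD := Rmat_posDef Rk Gk hRk hG α hα
    unfold fobj
    rw [Matrix.det_kronecker, Real.log_mul (pow_ne_zero _ hRD.det_pos.ne')
      (pow_ne_zero _ hQD.det_pos.ne'), Real.log_pow, Real.log_pow,
      Fintype.card_fin, Fintype.card_fin]
  have hsumA : ∀ α : Fin K → ℝ,
      ∑ k, ((q : ℝ) * ((Rmat Rk Gk αt)⁻¹ * ((Gk k)ᵀ * Rk k * Gk k)).trace) * α k
        = (q : ℝ) * ((Rmat Rk Gk αt)⁻¹ * Rmat Rk Gk α).trace := by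
    intro α
    rw [show Rmat Rk Gk α = ∑ k, α k • ((Gk k)ᵀ * Rk k * Gk k) from rfl,
      my_trace_mul_sum, Finset.mul_sum]
    exact Finset.sum_congr rfl fun k _ => by ring
  have hsumB : ∀ α : Fin K → ℝ,
      ∑ k, ((r : ℝ) * ((Qmat Qk Fk αt)⁻¹ * (Fk k * Qk k * (Fk k)ᵀ)).trace) / α k
        = (r : ℝ) * ((Qmat Qk Fk αt)⁻¹ * Qmat Qk Fk α).trace := by
    intro α
    rw [show Qmat Qk Fk α = ∑ k, (α k)⁻¹ • (Fk k * Qk k * (Fk k)ᵀ) from rfl,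
      my_trace_mul_sum, Finset.mul_sum]
    exact Finset.sum_congr rfl fun k _ => by rw [div_eq_mul_inv]; ring
  constructor
  · intro α hα
    have hQD := Qmat_posDef Qk Fk hQk hF α hα
    have hRD := Rmat_posDef Rk Gk hRk hG α hα
    have h1 := my_logdet_bound RDt hRD
    have h2 := my_logdet_bound QDt hQD
    rw [Fintype.card_fin] at h1 h2
    have h1' := mul_le_mul_of_nonneg_left h1 (Nat.cast_nonneg q : (0:ℝ) ≤ q)
    have h2' := mul_le_mul_of_nonneg_left h2 (Nat.cast_nonneg r : (0:ℝ) ≤ r)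
    rw [fobj_eq α hα, fobj_eq αt hαt]
    simp only [Finset.sum_add_distrib, hsumA α, hsumB α]
    nlinarith [h1', h2']
  · have hinvR : (Rmat Rk Gk αt)⁻¹ * Rmat Rk Gk αt = 1 :=
      Matrix.nonsing_inv_mul _ RDt.det_pos.ne'.isUnit
    have hinvQ : (Qmat Qk Fk αt)⁻¹ * Qmat Qk Fk αt = 1 :=
      Matrix.nonsing_inv_mul _ QDt.det_pos.ne'.isUnit
    have e1 := hsumA αt
    have e2 := hsumB αt
    rw [hinvR, Matrix.trace_one, Fintype.card_fin] at e1
    rw [hinvQ, Matrix.trace_one, Fintype.card_fin] at e2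
    simp only [Finset.sum_add_distrib, e1, e2]
    ring
end

section
/- Suppose Assumptions 1 and 2 hold, and let α⁽⁰⁾ ∈ S. Then the sublevel set Ω := {α ∈ S : f(α) ≤ f(α⁽⁰⁾)} is a bounded and closed subset of ℝ^K (hence compact). -/
open Matrix
open scoped Kronecker

section Aux

lemma conj_diag_entry {m n : Type*} [Fintype m] [Fintype n]
    (Q : Matrix n n ℝ) (F : Matrix m n ℝ) (i : m) :
    (F * Q * Fᵀ) i i = F i ⬝ᵥ (Q *ᵥ F i) := by
  simp [mul_apply, dotProduct, mulVec, Finset.mul_sum, Finset.sum_mul]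
  rw [Finset.sum_comm]
  exact Finset.sum_congr rfl fun a _ => Finset.sum_congr rfl fun b _ => by ring

lemma trace_conj_pos {m n : Type*} [Fintype m] [Fintype n]
    {Q : Matrix n n ℝ} (hQ : Q.PosDef)
    {F : Matrix m n ℝ} (hF : F ≠ 0) : 0 < (F * Q * Fᵀ).trace := by
  obtain ⟨i0, hi0⟩ : ∃ i, F i ≠ 0 := by
    by_contra h
    push_neg at h
    exact hF (by ext i j; simpa using congrFun (h i) j)
  rw [Matrix.trace]
  apply Finset.sum_pos'
  · intro i _
    rw [Matrix.diag_apply, conj_diag_entry]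
    simpa using hQ.posSemidef.dotProduct_mulVec_nonneg (F i)
  · exact ⟨i0, Finset.mem_univ _, by
      rw [Matrix.diag_apply, conj_diag_entry]
      simpa using hQ.dotProduct_mulVec_pos hi0⟩

lemma smul_one_posDef {n : Type*} [Fintype n] [DecidableEq n] {lam : ℝ} (hlam : 0 < lam) :
    (lam • (1 : Matrix n n ℝ)).PosDef := by
  have : lam • (1 : Matrix n n ℝ) = diagonal fun _ => lam := by
    ext i j
    by_cases h : i = j <;> simp [Matrix.one_apply, h]
  rw [this]
  exact Matrix.PosDef.diagonal fun _ => hlam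

lemma aux_posdef {n : Type*} [Fintype n] [DecidableEq n]
    {M : Matrix n n ℝ} {lam : ℝ} (hlam : 0 < lam)
    (h : (M - lam • (1 : Matrix n n ℝ)).PosDef) : M.PosDef := by
  have := h.add (smul_one_posDef hlam)
  simpa using this

lemma aux_eig_lb {n : Type*} [Fintype n] [DecidableEq n]
    {M : Matrix n n ℝ} {lam : ℝ} (hlam : 0 < lam)
    (h : (M - lam • (1 : Matrix n n ℝ)).PosDef)
    (hH : M.IsHermitian) (i : n) : lam ≤ hH.eigenvalues i := by
  set v : n → ℝ := ⇑(hH.eigenvectorBasis i) with hv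
  have hv0 : v ≠ 0 := by
    have hne := hH.eigenvectorBasis.orthonormal.ne_zero i
    intro hc
    apply hne
    ext j
    exact congrFun hc j
  have hpos := h.dotProduct_mulVec_pos hv0
  rw [sub_mulVec, hH.mulVec_eigenvectorBasis, smul_mulVec, one_mulVec,
    ← sub_smul, dotProduct_smul] at hpos
  have hvv : 0 < v ⬝ᵥ v := by
    have : (0:ℝ) < star v ⬝ᵥ v := Matrix.dotProduct_star_self_pos_iff.mpr hv0
    simpa using this
  simp only [star_trivial, smul_eq_mul] at hpos
  nlinarith

lemma trace_eq_sum_eig {n : Type*} [Fintype n] [DecidableEq n]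
    {M : Matrix n n ℝ} (hH : M.IsHermitian) :
    M.trace = ∑ i, hH.eigenvalues i := by
  rw [hH.trace_eq_sum_eigenvalues]
  simp

lemma det_lower {n : Type*} [Fintype n] [DecidableEq n] [Nonempty n]
    {M : Matrix n n ℝ} {lam : ℝ} (hlam : 0 < lam)
    (hH : M.IsHermitian) (hlb : ∀ i, lam ≤ hH.eigenvalues i) :
    lam ^ (Fintype.card n - 1) * (M.trace / (Fintype.card n)) ≤ M.det := by
  obtain ⟨i0, -, hmax⟩ := Finset.exists_max_image Finset.univ hH.eigenvalues
    ⟨Classical.arbitrary n, Finset.mem_univ _⟩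
  have hcard : (0 : ℝ) < (Fintype.card n : ℝ) := by
    exact_mod_cast Fintype.card_pos
  have htr : M.trace / (Fintype.card n) ≤ hH.eigenvalues i0 := by
    rw [div_le_iff₀ hcard, trace_eq_sum_eig hH]
    calc ∑ i, hH.eigenvalues i ≤ ∑ _i : n, hH.eigenvalues i0 :=
          Finset.sum_le_sum fun i _ => hmax i (Finset.mem_univ _)
      _ = hH.eigenvalues i0 * (Fintype.card n) := by
          simp [Finset.sum_const, mul_comm]
  have hdet : M.det = hH.eigenvalues i0 * ∏ i ∈ Finset.univ.erase i0, hH.eigenvalues i := by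
    have h := hH.det_eq_prod_eigenvalues
    rw [← Finset.mul_prod_erase Finset.univ _ (Finset.mem_univ i0)] at h
    exact_mod_cast h
  have hprod : lam ^ (Fintype.card n - 1) ≤ ∏ i ∈ Finset.univ.erase i0, hH.eigenvalues i := by
    have : lam ^ (Fintype.card n - 1) = ∏ _i ∈ Finset.univ.erase i0, lam := by
      rw [Finset.prod_const, Finset.card_erase_of_mem (Finset.mem_univ _), Finset.card_univ]
    rw [this]
    exact Finset.prod_le_prod (fun i _ => hlam.le) (fun i _ => hlb i)
  rw [hdet]
  have h1 : 0 ≤ M.trace / (Fintype.card n) := by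
    apply div_nonneg _ hcard.le
    rw [trace_eq_sum_eig hH]
    exact Finset.sum_nonneg fun i _ => le_trans hlam.le (hlb i)
  calc lam ^ (Fintype.card n - 1) * (M.trace / (Fintype.card n))
      ≤ (∏ i ∈ Finset.univ.erase i0, hH.eigenvalues i) * hH.eigenvalues i0 :=
        mul_le_mul hprod htr h1 (le_trans (pow_nonneg hlam.le _) hprod)
    _ = hH.eigenvalues i0 * ∏ i ∈ Finset.univ.erase i0, hH.eigenvalues i := mul_comm _ _

end Aux

/-- Lemma 2: under Assumptions 1 and 2, the sublevel set
`Ω = {α ∈ S : f(α) ≤ f(α⁽⁰⁾)}` is bounded and closed (hence compact). -/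
theorem sublevel_compact {q r K : ℕ} {qd rd : Fin K → ℕ}
    (Qk : ∀ k, Matrix (Fin (qd k)) (Fin (qd k)) ℝ)
    (Rk : ∀ k, Matrix (Fin (rd k)) (Fin (rd k)) ℝ)
    (hQk : ∀ k, (Qk k).PosDef) (hRk : ∀ k, (Rk k).PosDef)
    (Fk : ∀ k, Matrix (Fin q) (Fin (qd k)) ℝ)
    (Gk : ∀ k, Matrix (Fin (rd k)) (Fin r) ℝ)
    -- Assumption 1
    (hFk : ∀ k, Fk k ≠ 0) (hGk : ∀ k, Gk k ≠ 0)
    (hF : (Matrix.of fun i (j : (k : Fin K) × Fin (qd k)) => Fk j.1 i j.2 :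
      Matrix (Fin q) ((k : Fin K) × Fin (qd k)) ℝ).rank = q)
    (hG : (Matrix.of fun (j : (k : Fin K) × Fin (rd k)) i => Gk j.1 j.2 i :
      Matrix ((k : Fin K) × Fin (rd k)) (Fin r) ℝ).rank = r)
    -- Assumption 2
    (lammin : ℝ) (hlam : 0 < lammin)
    (hA2 : ∀ α : Fin K → ℝ, (∀ k, 0 < α k) →
      (Rmat Rk Gk α ⊗ₖ Qmat Qk Fk α -
        lammin • (1 : Matrix (Fin r × Fin q) (Fin r × Fin q) ℝ)).PosDef)
    (α0 : Fin K → ℝ) (hα0 : α0 ∈ feasibleS Rk Gk)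
    (Ω : Set (Fin K → ℝ))
    (hΩ : Ω = {α ∈ feasibleS Rk Gk | fobj Qk Rk Fk Gk α ≤ fobj Qk Rk Fk Gk α0}) :
    Bornology.IsBounded Ω ∧ IsClosed Ω ∧ IsCompact Ω := by
  suffices h : Bornology.IsBounded Ω ∧ IsClosed Ω by
    exact ⟨h.1, h.2, Metric.isCompact_iff_isClosed_bounded.mpr ⟨h.2, h.1⟩⟩
  rcases Nat.eq_zero_or_pos K with hK | hK
  · subst hK
    have hfin : Ω.Finite := Set.toFinite Ω
    exact ⟨hfin.isBounded, hfin.isClosed⟩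
  have k0 : Fin K := ⟨0, hK⟩
  rcases Nat.eq_zero_or_pos q with hq | hq
  · subst hq
    exact absurd (show Fk k0 = 0 by ext i j; exact i.elim0) (hFk k0)
  rcases Nat.eq_zero_or_pos r with hr | hr
  · subst hr
    exact absurd (show Gk k0 = 0 by ext i j; exact j.elim0) (hGk k0)
  haveI : Nonempty (Fin r × Fin q) := ⟨(⟨0, hr⟩, ⟨0, hq⟩)⟩
  set c : Fin K → ℝ := fun k => ((Gk k)ᵀ * Rk k * Gk k).trace with hc
  have hcpos : ∀ k, 0 < c k := by
    intro k
    have hGne : (Gk k)ᵀ ≠ 0 := by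
      intro h
      exact hGk k (by simpa using congrArg Matrix.transpose h)
    have := trace_conj_pos (hRk k) hGne
    simpa using this
  set d : Fin K → ℝ := fun k => (Fk k * Qk k * (Fk k)ᵀ).trace with hd
  have hdpos : ∀ k, 0 < d k := fun k => trace_conj_pos (hQk k) (hFk k)
  have htrR : ∀ α : Fin K → ℝ, (Rmat Rk Gk α).trace = ∑ k, α k * c k := by
    intro α
    simp [Rmat, Matrix.trace_sum, Matrix.trace_smul, hc, smul_eq_mul]
  have htrQ : ∀ α : Fin K → ℝ, (Qmat Qk Fk α).trace = ∑ k, (α k)⁻¹ * d k := by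
    intro α
    simp [Qmat, Matrix.trace_sum, Matrix.trace_smul, hd, smul_eq_mul]
  have hΩS : Ω ⊆ feasibleS Rk Gk := by rw [hΩ]; exact fun α hα => hα.1
  -- boundedness
  have hub : ∀ α ∈ feasibleS Rk Gk, ∀ k, α k ≤ (r : ℝ) / c k := by
    intro α hα k
    rw [le_div_iff₀ (hcpos k)]
    calc α k * c k ≤ ∑ j, α j * c j :=
          Finset.single_le_sum (fun j _ => (mul_pos (hα.1 j) (hcpos j)).le) (Finset.mem_univ k)
      _ = (r : ℝ) := by rw [← htrR α]; exact hα.2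
  have hbdd : Bornology.IsBounded Ω := by
    rw [isBounded_iff_forall_norm_le]
    have hnn : ∀ k, 0 ≤ (r : ℝ) / c k := fun k => div_nonneg (Nat.cast_nonneg r) (hcpos k).le
    refine ⟨∑ k, (r : ℝ) / c k, fun α hα => ?_⟩
    have hS := hΩS hα
    rw [pi_norm_le_iff_of_nonneg (Finset.sum_nonneg fun k _ => hnn k)]
    intro k
    rw [Real.norm_eq_abs, abs_of_pos (hS.1 k)]
    calc α k ≤ (r : ℝ) / c k := hub α hS k
      _ ≤ ∑ j, (r : ℝ) / c j := Finset.single_le_sum (fun j _ => hnn j) (Finset.mem_univ k)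
  refine ⟨hbdd, ?_⟩
  -- closedness
  set n : ℕ := Fintype.card (Fin r × Fin q) with hn
  have hnpos : (0 : ℝ) < (n : ℝ) := by exact_mod_cast Fintype.card_pos
  set c0 : ℝ := fobj Qk Rk Fk Gk α0 with hc0
  have hE : (0:ℝ) < Real.exp c0 := Real.exp_pos _
  set ε : Fin K → ℝ := fun k => lammin ^ (n - 1) * ((r : ℝ) * d k / n) / Real.exp c0 with hε
  have hεpos : ∀ k, 0 < ε k := by
    intro k
    have := hdpos k
    have hrpos : (0:ℝ) < (r:ℝ) := by exact_mod_cast hr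
    positivity
  have key : ∀ α ∈ Ω, ∀ k, ε k ≤ α k := by
    intro α hαΩ k
    rw [hΩ] at hαΩ
    obtain ⟨⟨hpos, htr⟩, hle⟩ := hαΩ
    set M := Rmat Rk Gk α ⊗ₖ Qmat Qk Fk α with hM
    have hpd : M.PosDef := aux_posdef hlam (hA2 α hpos)
    have hdetle : M.det ≤ Real.exp c0 := by
      have hlog : Real.log M.det ≤ c0 := hle
      calc M.det = Real.exp (Real.log M.det) := (Real.exp_log hpd.det_pos).symm
        _ ≤ Real.exp c0 := Real.exp_le_exp.mpr hlog
    have hlow : lammin ^ (n - 1) * (M.trace / (n : ℝ)) ≤ M.det :=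
      det_lower hlam hpd.isHermitian (aux_eig_lb hlam (hA2 α hpos) hpd.isHermitian)
    have htrM_ge : (r : ℝ) * ((α k)⁻¹ * d k) ≤ M.trace := by
      rw [hM, Matrix.trace_kronecker, htr, htrQ]
      apply mul_le_mul_of_nonneg_left _ (Nat.cast_nonneg r)
      exact Finset.single_le_sum
        (fun j _ => mul_nonneg (inv_nonneg.mpr (hpos j).le) (hdpos j).le) (Finset.mem_univ k)
    have step1 : lammin ^ (n - 1) * ((r : ℝ) * ((α k)⁻¹ * d k) / (n : ℝ)) ≤ Real.exp c0 := by
      calc lammin ^ (n - 1) * ((r : ℝ) * ((α k)⁻¹ * d k) / (n : ℝ))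
          ≤ lammin ^ (n - 1) * (M.trace / (n : ℝ)) := by gcongr
        _ ≤ M.det := hlow
        _ ≤ Real.exp c0 := hdetle
    rw [hε]
    rw [div_le_iff₀ hE]
    have hstep := mul_le_mul_of_nonneg_left step1 (hpos k).le
    calc lammin ^ (n - 1) * ((r:ℝ) * d k / (n:ℝ))
        = α k * (lammin ^ (n - 1) * ((r : ℝ) * ((α k)⁻¹ * d k) / (n : ℝ))) := by
          have hak : α k ≠ 0 := (hpos k).ne'
          have hnne : (n:ℝ) ≠ 0 := hnpos.ne'
          field_simp
      _ ≤ α k * Real.exp c0 := hstep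
  -- continuity of the determinant map on the open positive orthant
  set U : Set (Fin K → ℝ) := {α | ∀ k, 0 < α k} with hU
  have hUopen : IsOpen U := by
    have : U = ⋂ k, {α : Fin K → ℝ | 0 < α k} := by
      ext x; simp [hU, Set.mem_iInter]
    rw [this]
    exact isOpen_iInter_of_finite fun k => isOpen_lt continuous_const (continuous_apply k)
  set g : (Fin K → ℝ) → ℝ := fun α => (Rmat Rk Gk α ⊗ₖ Qmat Qk Fk α).det with hgdef
  have hfg : ∀ α : Fin K → ℝ, fobj Qk Rk Fk Gk α = Real.log (g α) := fun α => rfl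
  have hmat : ContinuousOn (fun α => Rmat Rk Gk α ⊗ₖ Qmat Qk Fk α) U := by
    apply continuousOn_pi.mpr
    intro i
    rw [continuousOn_pi]
    intro j
    have h1 : Continuous fun α : Fin K → ℝ => Rmat Rk Gk α i.1 j.1 := by
      have : (fun α : Fin K → ℝ => Rmat Rk Gk α i.1 j.1)
          = fun α => ∑ k, α k * ((Gk k)ᵀ * Rk k * Gk k) i.1 j.1 := by
        funext α
        simp [Rmat, Matrix.sum_apply, smul_eq_mul]
      rw [this]
      exact continuous_finset_sum _ fun k _ => (continuous_apply k).mul continuous_const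
    have h2 : ContinuousOn (fun α : Fin K → ℝ => Qmat Qk Fk α i.2 j.2) U := by
      have : (fun α : Fin K → ℝ => Qmat Qk Fk α i.2 j.2)
          = fun α => ∑ k, (α k)⁻¹ * (Fk k * Qk k * (Fk k)ᵀ) i.2 j.2 := by
        funext α
        simp [Qmat, Matrix.sum_apply, smul_eq_mul]
      rw [this]
      apply continuousOn_finset_sum
      intro k _
      exact (((continuous_apply k).continuousOn).inv₀ fun x hx => (hx k).ne').mul
        continuousOn_const
    exact (h1.continuousOn.mul h2 : ContinuousOn _ U)
  have hgcont : ContinuousOn g U :=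
    (Continuous.matrix_det continuous_id).comp_continuousOn hmat
  -- decomposition of the complement as a union of open sets
  rw [← isOpen_compl_iff]
  have hΩc : Ωᶜ = ({α : Fin K → ℝ | ∀ k, ε k ≤ α k} ∩
      {α : Fin K → ℝ | (Rmat Rk Gk α).trace = (r : ℝ)})ᶜ ∪
      (U ∩ g ⁻¹' Set.Ioi (Real.exp c0)) := by
    ext α
    simp only [Set.mem_union, Set.mem_compl_iff, Set.mem_inter_iff, Set.mem_setOf_eq,
      Set.mem_preimage, Set.mem_Ioi]
    constructor
    · intro hα
      by_cases hmem : (∀ k, ε k ≤ α k) ∧ (Rmat Rk Gk α).trace = (r : ℝ)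
      · right
        have hposα : ∀ k, 0 < α k := fun k => lt_of_lt_of_le (hεpos k) (hmem.1 k)
        refine ⟨hposα, ?_⟩
        have hnotf : ¬ (fobj Qk Rk Fk Gk α ≤ c0) := by
          intro hle
          exact hα (by rw [hΩ]; exact ⟨⟨hposα, hmem.2⟩, hle⟩)
        have hgpos : 0 < g α := (aux_posdef hlam (hA2 α hposα)).det_pos
        by_contra hgle
        push_neg at hgle
        apply hnotf
        rw [hfg α]
        calc Real.log (g α) ≤ Real.log (Real.exp c0) :=
              Real.log_le_log hgpos hgle
          _ = c0 := Real.log_exp c0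
      · left
        exact fun h => hmem ⟨h.1, h.2⟩
    · rintro (h | h)
      · intro hΩmem
        apply h
        have hkey := key α hΩmem
        rw [hΩ] at hΩmem
        exact ⟨hkey, hΩmem.1.2⟩
      · intro hΩmem
        rw [hΩ] at hΩmem
        have hle : Real.log (g α) ≤ c0 := by rw [← hfg α]; exact hΩmem.2
        have hlt : c0 < Real.log (g α) := by
          have := Real.log_lt_log (Real.exp_pos c0) h.2
          rwa [Real.log_exp] at this
        linarith
  rw [hΩc]
  apply IsOpen.union
  · apply isOpen_compl_iff.mpr
    apply IsClosed.inter
    · have : {α : Fin K → ℝ | ∀ k, ε k ≤ α k} = ⋂ k, {α : Fin K → ℝ | ε k ≤ α k} := by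
        ext x; simp [Set.mem_iInter]
      rw [this]
      exact isClosed_iInter fun k => isClosed_le continuous_const (continuous_apply k)
    · apply isClosed_eq _ continuous_const
      have : (fun α : Fin K → ℝ => (Rmat Rk Gk α).trace)
          = fun α => ∑ k, α k * c k := by funext α; exact htrR α
      rw [this]
      exact continuous_finset_sum _ fun k _ => (continuous_apply k).mul continuous_const
  · exact hgcont.isOpen_inter_preimage hUopen isOpen_Ioi
end
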